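/- arXiv:1310.7214 — 3 statements merged into one kernel-verified Lean document; each statement's English description precedes it below -/
import Mathlib

section
/- Let γ ∈ SL₂(ℂ) with Ψ(γ) = [[A, C′],[C, A′]] ∈ SB₂(ℍ) and γ ∉ SU₂(ℂ) (equivalently C ≠ 0). Then |A|² = (2 + ‖γ‖²)/4 and |C|² = (‖γ‖² − 2)/4. -/
open scoped Quaternion
open Matrix

/-- Embedding of `ℂ` into the real quaternions `ℍ`. -/
noncomputable def toQ (z : ℂ) : ℍ[ℝ] := ⟨z.re, z.im, 0, 0⟩

/-- The quaternion `j`. -/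
noncomputable def jq : ℍ[ℝ] := ⟨0, 0, 1, 0⟩

/-- The map `Ψ(γ) = ḡ γ g` where `g = (1/√2)[[1,j],[j,1]]`. -/
noncomputable def Ψ (γ : Matrix (Fin 2) (Fin 2) ℂ) : Matrix (Fin 2) (Fin 2) ℍ[ℝ] :=
  ((Real.sqrt 2)⁻¹ • !![(1 : ℍ[ℝ]), -jq; -jq, 1]) * (γ.map toQ) *
    ((Real.sqrt 2)⁻¹ • !![(1 : ℍ[ℝ]), jq; jq, 1])

/-- `‖γ‖²`, the sum of the squared moduli of the entries of `γ`. -/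
noncomputable def mnorm (γ : Matrix (Fin 2) (Fin 2) ℂ) : ℝ :=
  Complex.normSq (γ 0 0) + Complex.normSq (γ 0 1) + Complex.normSq (γ 1 0) + Complex.normSq (γ 1 1)

/-!
Writing `ℍ = ℂ ⊕ ℂj`, the entries of `Ψ γ` for `γ = [[a, b], [c, d]]` are
`A = ½((a + d̄) + (b - c̄)j)` and `C = ½((c + b̄) + (d - ā)j)`, so
`4|A|² = |a + d̄|² + |b - c̄|² = ‖γ‖² + 2 Re(ad - bc)` and likewise `4|C|² = ‖γ‖² - 2 Re(ad - bc)`.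
With `ad - bc = det γ = 1` this is the claim.
-/

@[simp] lemma toQ_re (z : ℂ) : (toQ z).re = z.re := rfl
@[simp] lemma toQ_imI (z : ℂ) : (toQ z).imI = z.im := rfl
@[simp] lemma toQ_imJ (z : ℂ) : (toQ z).imJ = 0 := rfl
@[simp] lemma toQ_imK (z : ℂ) : (toQ z).imK = 0 := rfl
@[simp] lemma jq_re : jq.re = 0 := rfl
@[simp] lemma jq_imI : jq.imI = 0 := rfl
@[simp] lemma jq_imJ : jq.imJ = 1 := rfl
@[simp] lemma jq_imK : jq.imK = 0 := rfl

lemma normSq_toQ_add_toQ_mul_jq (z w : ℂ) :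
    Quaternion.normSq (toQ z + toQ w * jq) = Complex.normSq z + Complex.normSq w := by
  rw [Quaternion.normSq_def']
  simp only [Quaternion.re_add, Quaternion.imI_add, Quaternion.imJ_add, Quaternion.imK_add,
    Quaternion.re_mul, Quaternion.imI_mul, Quaternion.imJ_mul, Quaternion.imK_mul,
    toQ_re, toQ_imI, toQ_imJ, toQ_imK, jq_re, jq_imI, jq_imJ, jq_imK, Complex.normSq_apply]
  ring

lemma Ψ_eq_inv_two_smul (γ : Matrix (Fin 2) (Fin 2) ℂ) :
    Ψ γ = (2 : ℝ)⁻¹ • (!![(1 : ℍ[ℝ]), -jq; -jq, 1] * γ.map toQ * !![(1 : ℍ[ℝ]), jq; jq, 1]) := by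
  rw [Ψ, Matrix.smul_mul, Matrix.mul_smul, Matrix.smul_mul, smul_smul, ← mul_inv,
    Real.mul_self_sqrt zero_le_two]

section Entries

variable (γ : Matrix (Fin 2) (Fin 2) ℂ)

lemma Ψ_zero_zero :
    Ψ γ 0 0 = (2 : ℝ)⁻¹ • (toQ (γ 0 0 + star (γ 1 1)) + toQ (γ 0 1 - star (γ 1 0)) * jq) := by
  rw [Ψ_eq_inv_two_smul, eta_fin_two (γ.map toQ), mul_fin_two, mul_fin_two]
  ext <;>
    simp [Quaternion.re_mul, Quaternion.imI_mul, Quaternion.imJ_mul, Quaternion.imK_mul] <;> ring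

lemma Ψ_one_zero :
    Ψ γ 1 0 = (2 : ℝ)⁻¹ • (toQ (γ 1 0 + star (γ 0 1)) + toQ (γ 1 1 - star (γ 0 0)) * jq) := by
  rw [Ψ_eq_inv_two_smul, eta_fin_two (γ.map toQ), mul_fin_two, mul_fin_two]
  ext <;>
    simp [Quaternion.re_mul, Quaternion.imI_mul, Quaternion.imJ_mul, Quaternion.imK_mul] <;> ring

lemma normSq_Ψ_zero_zero :
    Quaternion.normSq (Ψ γ 0 0) = (mnorm γ + 2 * γ.det.re) / 4 := by
  rw [Ψ_zero_zero, Quaternion.normSq_smul, normSq_toQ_add_toQ_mul_jq, det_fin_two]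
  simp only [mnorm, Complex.normSq_apply, RCLike.star_def, Complex.add_re, Complex.add_im,
    Complex.sub_re, Complex.sub_im, Complex.conj_re, Complex.conj_im, Complex.mul_re]
  ring

lemma normSq_Ψ_one_zero :
    Quaternion.normSq (Ψ γ 1 0) = (mnorm γ - 2 * γ.det.re) / 4 := by
  rw [Ψ_one_zero, Quaternion.normSq_smul, normSq_toQ_add_toQ_mul_jq, det_fin_two]
  simp only [mnorm, Complex.normSq_apply, RCLike.star_def, Complex.add_re, Complex.add_im,
    Complex.sub_re, Complex.sub_im, Complex.conj_re, Complex.conj_im, Complex.mul_re]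
  ring

end Entries

theorem stmt4_general (γ : Matrix (Fin 2) (Fin 2) ℂ) (hdet : γ.det = 1) :
    Quaternion.normSq (Ψ γ 0 0) = (2 + mnorm γ) / 4 ∧
    Quaternion.normSq (Ψ γ 1 0) = (mnorm γ - 2) / 4 := by
  rw [normSq_Ψ_zero_zero, normSq_Ψ_one_zero, hdet, Complex.one_re]
  constructor <;> ring

/-- For `γ ∈ SL₂(ℂ) \ SU₂(ℂ)` with `Ψ(γ) = [[A, C′],[C, A′]]`,
`|A|² = (2 + ‖γ‖²)/4` and `|C|² = (‖γ‖² − 2)/4`. -/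
theorem stmt4 (γ : Matrix (Fin 2) (Fin 2) ℂ) (hdet : γ.det = 1) (hsu : mnorm γ ≠ 2) :
    Quaternion.normSq (Ψ γ 0 0) = (2 + mnorm γ) / 4 ∧
    Quaternion.normSq (Ψ γ 1 0) = (mnorm γ - 2) / 4 :=
  stmt4_general γ hdet
end

section
/- Let τ denote entrywise complex conjugation on SL₂(ℂ), and let σ² be conjugation by diag(i, −i). For γ = [[a,b],[c,d]] ∈ SL₂(ℂ)\SU₂(ℂ) with |a|²+|c|² ≠ 1, the centers and radii of the bisectors Σ_γ in ℍ³ satisfy P_{τ(γ)} = conj(P_γ), R_{τ(γ)} = R_γ, and P_{σ²(γ)} = −P_γ, R_{σ²(γ)} = R_γ. Moreover, for σ = conjugation by diag(√i, √(−i)), P_{σ(γ)} = i·P_γ and R_{σ(γ)} = R_γ. -/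
open Matrix

/-- The center `P_γ = −(āb+c̄d)/(|a|²+|c|²−1) ∈ ℂ` of the bisector sphere `Σ_γ` in `ℍ³`. -/
noncomputable def ctr (γ : Matrix (Fin 2) (Fin 2) ℂ) : ℂ :=
  -((starRingEnd ℂ) (γ 0 0) * γ 0 1 + (starRingEnd ℂ) (γ 1 0) * γ 1 1) /
    ((Complex.normSq (γ 0 0) + Complex.normSq (γ 1 0) - 1 : ℝ) : ℂ)

/-- The squared radius `R_γ² = (1+|P_γ|²)/(|a|²+|c|²)` of the bisector sphere `Σ_γ` in `ℍ³`. -/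
noncomputable def radSq (γ : Matrix (Fin 2) (Fin 2) ℂ) : ℝ :=
  (1 + Complex.normSq (ctr γ)) / (Complex.normSq (γ 0 0) + Complex.normSq (γ 1 0))

lemma diag_conj (u v : ℂ) (huv : u * v = 1) (γ : Matrix (Fin 2) (Fin 2) ℂ) :
    !![u, 0; 0, v] * γ * (!![u, 0; 0, v])⁻¹ =
      !![γ 0 0, u^2 * γ 0 1; v^2 * γ 1 0, γ 1 1] := by
  have hinv : (!![u, 0; 0, v])⁻¹ = !![v, 0; 0, u] := by
    apply inv_eq_right_inv
    ext i j
    fin_cases i <;> fin_cases j <;>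
      simp [Matrix.mul_apply, Fin.sum_univ_two, huv, mul_comm u v ▸ huv]
  rw [hinv]
  ext i j
  fin_cases i <;> fin_cases j <;>
    simp [Matrix.mul_apply, Matrix.vecMul, dotProduct, Fin.sum_univ_two] <;>
    first
      | (rw [show u * γ 0 0 * v = γ 0 0 * (u*v) by ring, huv, mul_one])
      | (rw [show v * γ 1 1 * u = γ 1 1 * (u*v) by ring, huv, mul_one])
      | ring

/-- For `τ` the entrywise complex conjugation, `σ²` the conjugation by `diag(i,−i)` and `σ` the
conjugation by `diag(√i, √(−i))` (for fixed square roots with `diag(√i,√(−i)) ∈ SL₂(ℂ)`), and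
`γ = [[a,b],[c,d]] ∈ SL₂(ℂ)\SU₂(ℂ)` with `|a|²+|c|² ≠ 1`:
`P_{τ(γ)} = conj(P_γ)`, `R_{τ(γ)} = R_γ`, `P_{σ²(γ)} = −P_γ`, `R_{σ²(γ)} = R_γ`,
`P_{σ(γ)} = i·P_γ` and `R_{σ(γ)} = R_γ`. -/
theorem stmt14 (γ : Matrix (Fin 2) (Fin 2) ℂ) (hdet : γ.det = 1) (hsu : mnorm γ ≠ 2)
    (h1 : Complex.normSq (γ 0 0) + Complex.normSq (γ 1 0) ≠ 1)
    (s : ℂ) (hs : s ^ 2 = Complex.I) :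
    ctr (γ.map (starRingEnd ℂ)) = (starRingEnd ℂ) (ctr γ) ∧
    radSq (γ.map (starRingEnd ℂ)) = radSq γ ∧
    ctr (!![Complex.I, 0; 0, -Complex.I] * γ * (!![Complex.I, 0; 0, -Complex.I])⁻¹) = -ctr γ ∧
    radSq (!![Complex.I, 0; 0, -Complex.I] * γ * (!![Complex.I, 0; 0, -Complex.I])⁻¹) = radSq γ ∧
    ctr (!![s, 0; 0, s⁻¹] * γ * (!![s, 0; 0, s⁻¹])⁻¹) = Complex.I * ctr γ ∧
    radSq (!![s, 0; 0, s⁻¹] * γ * (!![s, 0; 0, s⁻¹])⁻¹) = radSq γ := by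
  have hs0 : s ≠ 0 := by
    intro h; rw [h] at hs; simp at hs; exact Complex.I_ne_zero hs.symm
  have h2 : !![Complex.I, 0; 0, -Complex.I] * γ * (!![Complex.I, 0; 0, -Complex.I])⁻¹ =
      !![γ 0 0, -γ 0 1; -γ 1 0, γ 1 1] := by
    rw [diag_conj Complex.I (-Complex.I) (by simp [Complex.I_mul_I])]
    norm_num [Complex.I_sq]
  have h3 : !![s, 0; 0, s⁻¹] * γ * (!![s, 0; 0, s⁻¹])⁻¹ =
      !![γ 0 0, Complex.I * γ 0 1; -Complex.I * γ 1 0, γ 1 1] := by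
    rw [diag_conj s s⁻¹ (mul_inv_cancel₀ hs0)]
    rw [hs]
    congr 1
    rw [show (s⁻¹)^2 = (s^2)⁻¹ by ring, hs, Complex.inv_I]
  have hcτ : ctr (γ.map (starRingEnd ℂ)) = (starRingEnd ℂ) (ctr γ) := by
    simp [ctr, Matrix.map_apply, map_div₀, map_neg, map_add]
  have hc2 : ctr (!![Complex.I, 0; 0, -Complex.I] * γ * (!![Complex.I, 0; 0, -Complex.I])⁻¹)
      = -ctr γ := by
    rw [h2]; simp [ctr]; ring
  have hcs : ctr (!![s, 0; 0, s⁻¹] * γ * (!![s, 0; 0, s⁻¹])⁻¹) = Complex.I * ctr γ := by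
    rw [h3]; simp [ctr]; ring
  refine ⟨hcτ, ?_, hc2, ?_, hcs, ?_⟩
  · rw [radSq, radSq, hcτ, Complex.normSq_conj]
    simp [Matrix.map_apply]
  · rw [radSq, radSq, hc2, Complex.normSq_neg, h2]
    simp
  · rw [radSq, radSq, hcs, Complex.normSq_mul, Complex.normSq_I, one_mul, h3]
    simp
end

section
/- Let d be a positive squarefree integer with d ≡ 3 mod 4, K = ℚ(√−d), ω = (1+√−d)/2, and let u = u₀+u₁i+u₂j+u₃k ∈ ℍ(−1,−1, ℤ[ω]) with N(u) = ±1, where u_t = x_t + y_t ω with x_t, y_t ∈ ℤ. Writing x = (x₀,x₁,x₂,x₃), y = (y₀,y₁,y₂,y₃), one has ‖x‖² − ((d+1)/4)‖y‖² = ±1 and 2⟨x,y⟩ + ‖y‖² = 0. Moreover, for the embedding γ_u = [[u₀+u₁i, u₂+u₃i],[−u₂+u₃i, u₀−u₁i]] (with ω ↦ (1+√d·i)/2 ∈ ℂ), ‖γ_u‖² = 2N(u) + d‖y‖², which is an even integer. -/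
open Finset

/-- Let `d` be a positive squarefree integer, `d ≡ 3 mod 4`, `ω = (1+√−d)/2`, and
`u = u₀+u₁i+u₂j+u₃k ∈ ℍ(−1,−1,ℤ[ω])` with `N(u) = ±1`, where `u_t = x_t + y_t ω`. Then
`‖x‖² − ((d+1)/4)‖y‖² = ±1` and `2⟨x,y⟩ + ‖y‖² = 0`; moreover, for the embedding
`γ_u = [[u₀+u₁i, u₂+u₃i],[−u₂+u₃i, u₀−u₁i]]`, `‖γ_u‖² = 2N(u) + d‖y‖²`, an even integer. -/
theorem stmt15 (d : ℕ) (hd : Squarefree d) (hd4 : d % 4 = 3)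
    (x y : Fin 4 → ℤ) (ε : ℤ) (hε : ε = 1 ∨ ε = -1)
    (u : Fin 4 → ℂ)
    (hu : ∀ t, u t = (x t : ℂ) + (y t : ℂ) * ((1 + (Real.sqrt d : ℂ) * Complex.I) / 2))
    (hN : ∑ t, (u t) ^ 2 = (ε : ℂ)) :
    (∑ t, (x t) ^ 2) - (((d : ℤ) + 1) / 4) * ∑ t, (y t) ^ 2 = ε ∧
    2 * (∑ t, x t * y t) + ∑ t, (y t) ^ 2 = 0 ∧
    Complex.normSq (u 0 + u 1 * Complex.I) + Complex.normSq (u 2 + u 3 * Complex.I) +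
        Complex.normSq (-(u 2) + u 3 * Complex.I) + Complex.normSq (u 0 - u 1 * Complex.I) =
      ((2 * ε + (d : ℤ) * ∑ t, (y t) ^ 2 : ℤ) : ℝ) ∧
    ∃ m : ℤ, (2 * ε + (d : ℤ) * ∑ t, (y t) ^ 2 : ℤ) = 2 * m := by
  set s : ℝ := Real.sqrt d with hsdef
  have hdpos : 0 < d := by omega
  have hs2 : s ^ 2 = d := Real.sq_sqrt (by positivity)
  have hspos : 0 < s := Real.sqrt_pos.2 (by exact_mod_cast hdpos)
  set A : ℤ := ∑ t, (x t) ^ 2 with hA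
  set B : ℤ := ∑ t, x t * y t with hB
  set C : ℤ := ∑ t, (y t) ^ 2 with hC
  have key : ∑ t, (u t) ^ 2 =
      (((A : ℝ) + B + C * (1 - d) / 4 : ℝ) : ℂ) + (((B : ℝ) + C / 2) * s : ℝ) * Complex.I := by
    have hsc : ((s : ℂ)) ^ 2 = (d : ℂ) := by exact_mod_cast congrArg (Complex.ofReal) hs2
    simp only [hA, hB, hC, hu, Fin.sum_univ_four]
    push_cast
    linear_combination ((((y 0 : ℂ)^2 + (y 1 : ℂ)^2 + (y 2 : ℂ)^2 + (y 3 : ℂ)^2) / 4) * (s : ℂ)^2) * Complex.I_sq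
      - (((y 0 : ℂ)^2 + (y 1 : ℂ)^2 + (y 2 : ℂ)^2 + (y 3 : ℂ)^2) / 4) * hsc
  rw [key] at hN
  have hre : (A : ℝ) + B + C * (1 - d) / 4 = ε := by
    have := congrArg Complex.re hN
    simpa using this
  have him : ((B : ℝ) + C / 2) * s = 0 := by
    have := congrArg Complex.im hN
    simpa using this
  have him2 : (B : ℝ) + C / 2 = 0 := by
    rcases mul_eq_zero.1 him with h | h
    · exact h
    · exact absurd h (ne_of_gt hspos)
  have hBC : 2 * B + C = 0 := by
    have : (2 * B + C : ℝ) = 0 := by linarith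
    exact_mod_cast this
  have h4 : ((d : ℤ) + 1) % 4 = 0 := by omega
  have he : 4 * (((d : ℤ) + 1) / 4) = (d : ℤ) + 1 := by omega
  have hmain : A - (((d : ℤ) + 1) / 4) * C = ε := by
    have h4r : (4 * A + 4 * B + C * (1 - d) : ℝ) = 4 * ε := by linarith
    have h4z : 4 * A + 4 * B + C * (1 - d) = 4 * ε := by exact_mod_cast h4r
    have h1 : 4 * A - ((d : ℤ) + 1) * C = 4 * ε := by linarith
    have h2 : ((d : ℤ) + 1) * C = 4 * ((((d : ℤ) + 1) / 4) * C) := by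
      rw [← mul_assoc, he]
    linarith
  refine ⟨hmain, hBC, ?_, ⟨ε - d * B, by
    have hC2 : C = -2 * B := by omega
    rw [hC2]; ring⟩⟩
  have hform : ∀ t, Complex.normSq (u t) = ((x t : ℝ) + y t / 2) ^ 2 + ((y t : ℝ) * s / 2) ^ 2 := by
    intro t
    rw [hu t, Complex.normSq_apply]
    simp
    ring
  have hexp : Complex.normSq (u 0 + u 1 * Complex.I) + Complex.normSq (u 2 + u 3 * Complex.I) +
      Complex.normSq (-(u 2) + u 3 * Complex.I) + Complex.normSq (u 0 - u 1 * Complex.I) =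
      2 * (Complex.normSq (u 0) + Complex.normSq (u 1) + Complex.normSq (u 2) +
        Complex.normSq (u 3)) := by
    simp only [Complex.normSq_apply, Complex.add_re, Complex.add_im, Complex.sub_re,
      Complex.sub_im, Complex.neg_re, Complex.neg_im, Complex.mul_re, Complex.mul_im,
      Complex.I_re, Complex.I_im]
    ring
  rw [hexp, hform 0, hform 1, hform 2, hform 3]
  have hCr : (C : ℝ) = (y 0 : ℝ) ^ 2 + y 1 ^ 2 + y 2 ^ 2 + y 3 ^ 2 := by
    simp [hC, Fin.sum_univ_four]
  have hAr : (A : ℝ) = (x 0 : ℝ) ^ 2 + x 1 ^ 2 + x 2 ^ 2 + x 3 ^ 2 := by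
    simp [hA, Fin.sum_univ_four]
  have hBr : (B : ℝ) = (x 0 : ℝ) * y 0 + x 1 * y 1 + x 2 * y 2 + x 3 * y 3 := by
    simp [hB, Fin.sum_univ_four]
  push_cast
  linear_combination 2 * hre - 2 * hAr - 2 * hBr +
    (((y 0 : ℝ)^2 + (y 1 : ℝ)^2 + (y 2 : ℝ)^2 + (y 3 : ℝ)^2) / 2) * hs2 -
    ((1 + (d : ℝ)) / 2) * hCr
end
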